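/- arXiv:cond-mat/0104295 — 5 statements merged into one kernel-verified Lean document; each statement's English description precedes it below -/
import Mathlib

section
/- Fix a confidence level α ∈ (0,1) and a probability space (Ω,𝒜,P). For real-valued random variables X, Y on (Ω,𝒜,P) with E[X⁻] < ∞ and E[Y⁻] < ∞, the Expected Shortfall ES_α is a coherent risk measure: (i) monotonicity: if X ≥ 0 almost surely then ES_α(X) ≤ 0; (ii) sub-additivity: ES_α(X+Y) ≤ ES_α(X) + ES_α(Y); (iii) positive homogeneity: for every h > 0, ES_α(h·X) = h·ES_α(X); (iv) translation invariance: for every a ∈ ℝ, ES_α(X + a) = ES_α(X) − a. -/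
open MeasureTheory ProbabilityTheory Filter
open scoped Classical

noncomputable section

variable {Ω : Type*} [MeasurableSpace Ω]

/-- Lower α-quantile: inf {x | P[X ≤ x] ≥ α}. -/
def lowerQuantile (P : Measure Ω) (X : Ω → ℝ) (α : ℝ) : ℝ :=
  sInf {x : ℝ | α ≤ (P {ω | X ω ≤ x}).toReal}

/-- Upper α-quantile: inf {x | P[X ≤ x] > α}. -/
def upperQuantile (P : Measure Ω) (X : Ω → ℝ) (α : ℝ) : ℝ :=
  sInf {x : ℝ | α < (P {ω | X ω ≤ x}).toReal}

/-- α-tail mean. -/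
def tailMean (P : Measure Ω) (X : Ω → ℝ) (α : ℝ) : ℝ :=
  α⁻¹ * ((∫ ω in {ω | X ω ≤ lowerQuantile P X α}, X ω ∂P)
    + lowerQuantile P X α * (α - (P {ω | X ω ≤ lowerQuantile P X α}).toReal))

/-- Expected Shortfall. -/
def ES (P : Measure Ω) (X : Ω → ℝ) (α : ℝ) : ℝ := - tailMean P X α

/-- Conditional expectation given an event: E[X | A] = E[X·1_A] / P[A]. -/
def condExpEvent (P : Measure Ω) (X : Ω → ℝ) (A : Set Ω) : ℝ :=
  (∫ ω in A, X ω ∂P) / (P A).toReal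

/-- Lower tail conditional expectation. -/
def TCElow (P : Measure Ω) (X : Ω → ℝ) (α : ℝ) : ℝ :=
  - condExpEvent P X {ω | X ω ≤ lowerQuantile P X α}

/-- Upper tail conditional expectation. -/
def TCEup (P : Measure Ω) (X : Ω → ℝ) (α : ℝ) : ℝ :=
  - condExpEvent P X {ω | X ω ≤ upperQuantile P X α}

/-- Worst conditional expectation. -/
def WCE (P : Measure Ω) (X : Ω → ℝ) (α : ℝ) : ℝ :=
  - sInf {y : ℝ | ∃ A : Set Ω, MeasurableSet A ∧ α < (P A).toReal ∧ y = condExpEvent P X A}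

/-- Conditional value-at-risk. -/
def CVaR (P : Measure Ω) (X : Ω → ℝ) (α : ℝ) : ℝ :=
  sInf {y : ℝ | ∃ s : ℝ, y = (∫ ω, max (-(X ω - s)) 0 ∂P) / α - s}

/-- Modified indicator 1^{(α)}_{X ≤ x}. -/
def modInd (P : Measure Ω) (X : Ω → ℝ) (α x : ℝ) (ω : Ω) : ℝ :=
  if P {a | X a = x} = 0 then Set.indicator {a | X a ≤ x} (fun _ => (1 : ℝ)) ω
  else Set.indicator {a | X a ≤ x} (fun _ => (1 : ℝ)) ω
    + ((α - (P {a | X a ≤ x}).toReal) / (P {a | X a = x}).toReal)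
      * Set.indicator {a | X a = x} (fun _ => (1 : ℝ)) ω

/-- Sum of the k smallest entries of (X 0 ω, ..., X (n-1) ω). -/
def tailSum (Xs : ℕ → Ω → ℝ) (n k : ℕ) (ω : Ω) : ℝ :=
  ((List.insertionSort (· ≤ ·) (List.ofFn fun i : Fin n => Xs i ω)).take k).sum

/-!
Expected Shortfall is the minimum over `s` of the Rockafellar–Uryasev function
`s ↦ E[(s - X)⁺] / α - s`, attained at the lower quantile `q`: integrating the subgradient
inequality of `t ↦ (t - x)⁺` at `q` reduces minimality to `P[X < q] ≤ α ≤ P[X ≤ q]`. The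
coherence properties are then read off the objective: it is subadditive jointly in `(X, s)`,
transforms affinely under `X ↦ h X` and `X ↦ X + a` (with `s ↦ s / h` and `s ↦ s - a`), and
vanishes at `s = 0` when `X ≥ 0`.
-/

open Set
open scoped Topology

theorem Monotone.bddBelow_setOf_le {F : ℝ → ℝ} (hF : Monotone F) {α x₀ : ℝ} (hx₀ : F x₀ < α) :
    BddBelow {x | α ≤ F x} :=
  ⟨x₀, fun _ hx => le_of_not_gt fun hxx₀ => (hx.trans (hF hxx₀.le)).not_gt hx₀⟩

theorem StieltjesFunction.le_apply_sInf_setOf_le (F : StieltjesFunction ℝ) {α : ℝ}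
    (hne : ∃ x, α ≤ F x) (hlt : ∃ x, F x < α) : α ≤ F (sInf {x | α ≤ F x}) := by
  obtain ⟨x₀, hx₀⟩ := hlt
  have hright : ∀ᶠ x in 𝓝[>] sInf {x | α ≤ F x}, α ≤ F x := by
    filter_upwards [self_mem_nhdsWithin] with x hx
    obtain ⟨y, hy, hyx⟩ := (csInf_lt_iff (F.mono.bddBelow_setOf_le hx₀) hne).1 hx
    exact hy.trans (F.mono hyx.le)
  exact ge_of_tendsto ((F.right_continuous _).mono Ioi_subset_Ici_self) hright

theorem Monotone.leftLim_sInf_setOf_le {F : ℝ → ℝ} (hF : Monotone F) {α : ℝ}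
    (hlt : ∃ x, F x < α) : Function.leftLim F (sInf {x | α ≤ F x}) ≤ α := by
  obtain ⟨x₀, hx₀⟩ := hlt
  rw [hF.leftLim_eq_sSup]
  refine csSup_le (nonempty_Iio.image F) (forall_mem_image.2 fun x hx => le_of_lt ?_)
  exact not_le.1 (notMem_of_lt_csInf (s := {x | α ≤ F x}) hx (hF.bddBelow_setOf_le hx₀))

theorem exists_cdf_lt (μ : Measure ℝ) {α : ℝ} (hα : 0 < α) : ∃ x, cdf μ x < α :=
  ((tendsto_cdf_atBot μ).eventually (eventually_lt_nhds hα)).exists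

theorem exists_le_cdf (μ : Measure ℝ) {α : ℝ} (hα : α < 1) : ∃ x, α ≤ cdf μ x :=
  ((tendsto_cdf_atTop μ).eventually (eventually_ge_nhds hα)).exists

section Quantile

variable {P : Measure Ω} [IsProbabilityMeasure P] {Z : Ω → ℝ} {α : ℝ}

theorem cdf_map_apply (hZ : Measurable Z) (x : ℝ) :
    cdf (P.map Z) x = (P {ω | Z ω ≤ x}).toReal := by
  have := Measure.isProbabilityMeasure_map (μ := P) hZ.aemeasurable
  rw [cdf_eq_real, map_measureReal_apply hZ measurableSet_Iic, measureReal_def]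
  rfl

theorem lowerQuantile_eq_sInf_cdf (hZ : Measurable Z) :
    lowerQuantile P Z α = sInf {x | α ≤ cdf (P.map Z) x} := by
  simp only [lowerQuantile, cdf_map_apply hZ]

theorem le_measure_le_lowerQuantile (hZ : Measurable Z) (hα : α ∈ Ioo (0 : ℝ) 1) :
    α ≤ (P {ω | Z ω ≤ lowerQuantile P Z α}).toReal := by
  rw [← cdf_map_apply hZ, lowerQuantile_eq_sInf_cdf hZ]
  exact (cdf _).le_apply_sInf_setOf_le (exists_le_cdf _ hα.2) (exists_cdf_lt _ hα.1)

theorem measure_lt_lowerQuantile_le (hZ : Measurable Z) (hα : α ∈ Ioo (0 : ℝ) 1) :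
    (P {ω | Z ω < lowerQuantile P Z α}).toReal ≤ α := by
  have := Measure.isProbabilityMeasure_map (μ := P) hZ.aemeasurable
  have hlaw : P {ω | Z ω < lowerQuantile P Z α}
      = ENNReal.ofReal (Function.leftLim (cdf (P.map Z)) (lowerQuantile P Z α)) := by
    rw [← sub_zero (Function.leftLim _ _), ← (cdf _).measure_Iio (tendsto_cdf_atBot _),
      measure_cdf, Measure.map_apply hZ measurableSet_Iio]
    rfl
  rw [hlaw, lowerQuantile_eq_sInf_cdf hZ]
  exact ENNReal.toReal_le_of_le_ofReal hα.1.le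
    (ENNReal.ofReal_le_ofReal ((monotone_cdf _).leftLim_sInf_setOf_le (exists_cdf_lt _ hα.1)))

end Quantile

theorem MeasureTheory.Integrable.max_zero_of_le {μ : Measure Ω} {f g : Ω → ℝ}
    (hg : Integrable g μ) (hf : AEStronglyMeasurable f μ) (hfg : f ≤ᵐ[μ] g) :
    Integrable (fun ω => max (f ω) 0) μ :=
  hg.pos_part.mono (hf.aemeasurable.max aemeasurable_const).aestronglyMeasurable
    (hfg.mono fun ω h => by
      simp only [Real.norm_eq_abs, abs_of_nonneg (le_max_right _ (0 : ℝ))]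
      exact max_le_max h le_rfl)

section NegPart

variable {μ : Measure Ω} {X Y : Ω → ℝ}

theorem integrable_max_neg_add (hX : Measurable X) (hY : Measurable Y)
    (hXint : Integrable (fun ω => max (-(X ω)) 0) μ)
    (hYint : Integrable (fun ω => max (-(Y ω)) 0) μ) :
    Integrable (fun ω => max (-(X ω + Y ω)) 0) μ :=
  (hXint.add hYint).max_zero_of_le (by fun_prop) (.of_forall fun ω =>
    show -(X ω + Y ω) ≤ max (-(X ω)) 0 + max (-(Y ω)) 0 by
      linarith [le_max_left (-(X ω)) 0, le_max_left (-(Y ω)) 0])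

theorem integrable_max_neg_const_mul (hX : Measurable X)
    (hXint : Integrable (fun ω => max (-(X ω)) 0) μ) {h : ℝ} (hh : 0 ≤ h) :
    Integrable (fun ω => max (-(h * X ω)) 0) μ :=
  (hXint.const_mul h).max_zero_of_le (by fun_prop) (.of_forall fun ω =>
    show -(h * X ω) ≤ h * max (-(X ω)) 0 by nlinarith [le_max_left (-(X ω)) 0])

theorem integrable_max_neg_add_const [IsFiniteMeasure μ] (hX : Measurable X)
    (hXint : Integrable (fun ω => max (-(X ω)) 0) μ) (a : ℝ) :
    Integrable (fun ω => max (-(X ω + a)) 0) μ :=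
  (hXint.add (integrable_const (-a))).max_zero_of_le (by fun_prop) (.of_forall fun ω =>
    show -(X ω + a) ≤ max (-(X ω)) 0 + -a by linarith [le_max_left (-(X ω)) 0])

end NegPart

theorem IsLeast.range_affine_comp {ι κ : Type*} {f : ι → ℝ} {m : ℝ} (hm : IsLeast (range f) m)
    {e : κ → ι} (he : Function.Surjective e) {c : ℝ} (hc : 0 ≤ c) (d : ℝ) :
    IsLeast (range fun k => c * f (e k) + d) (c * m + d) := by
  have hrange : (range fun k => c * f (e k) + d) = (fun x => c * x + d) '' range f := by
    rw [← he.range_comp f, ← range_comp]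
    rfl
  rw [hrange]
  exact Monotone.map_isLeast (fun x y hxy => by gcongr) hm

def rockafellarUryasev (P : Measure Ω) (Z : Ω → ℝ) (α s : ℝ) : ℝ :=
  (∫ ω, max (s - Z ω) 0 ∂P) / α - s

section RockafellarUryasev

variable {P : Measure Ω} {Z : Ω → ℝ} {α : ℝ}

theorem integrable_max_sub [IsFiniteMeasure P] (hZ : Measurable Z)
    (hZint : Integrable (fun ω => max (-(Z ω)) 0) P) (s : ℝ) :
    Integrable (fun ω => max (s - Z ω) 0) P :=
  ((integrable_const s).add hZint).max_zero_of_le (by fun_prop)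
    (.of_forall fun ω => show s - Z ω ≤ s + max (-(Z ω)) 0 by
      linarith [le_max_left (-(Z ω)) 0])

theorem integral_max_sub_eq [IsFiniteMeasure P] (hZ : Measurable Z)
    (hZint : Integrable (fun ω => max (-(Z ω)) 0) P) (c : ℝ) :
    ∫ ω, max (c - Z ω) 0 ∂P = c * (P {ω | Z ω ≤ c}).toReal - ∫ ω in {ω | Z ω ≤ c}, Z ω ∂P := by
  have hA : MeasurableSet {ω | Z ω ≤ c} := hZ measurableSet_Iic
  have hpos : EqOn (fun ω => max (c - Z ω) 0) (fun ω => c - Z ω) {ω | Z ω ≤ c} :=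
    fun ω hω => max_eq_left (sub_nonneg.2 hω)
  have hsub : IntegrableOn (fun ω => c - Z ω) {ω | Z ω ≤ c} P :=
    (integrable_max_sub hZ hZint c).integrableOn.congr_fun hpos hA
  have hZA : IntegrableOn Z {ω | Z ω ≤ c} P :=
    ((integrable_const c).integrableOn.sub hsub).congr_fun (fun ω _ => sub_sub_cancel c (Z ω)) hA
  rw [← setIntegral_eq_integral_of_forall_compl_eq_zero (s := {ω | Z ω ≤ c}) fun ω hω =>
      max_eq_right (sub_nonpos.2 (le_of_lt (not_le.1 hω))),
    setIntegral_congr_fun hA hpos, integral_sub (integrable_const c).integrableOn hZA,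
    setIntegral_const, smul_eq_mul, measureReal_def, mul_comm]

theorem ES_eq_rockafellarUryasev_lowerQuantile [IsFiniteMeasure P] (hZ : Measurable Z)
    (hZint : Integrable (fun ω => max (-(Z ω)) 0) P) (hα : α ≠ 0) :
    ES P Z α = rockafellarUryasev P Z α (lowerQuantile P Z α) := by
  rw [ES, tailMean, rockafellarUryasev, integral_max_sub_eq hZ hZint]
  field_simp
  ring

theorem integral_max_sub_add_le [IsFiniteMeasure P] (hZ : Measurable Z)
    (hZint : Integrable (fun ω => max (-(Z ω)) 0) P) {A : Set Ω} (hA : MeasurableSet A) {q : ℝ}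
    (hlt : {ω | Z ω < q} ⊆ A) (hle : A ⊆ {ω | Z ω ≤ q}) (s : ℝ) :
    (∫ ω, max (q - Z ω) 0 ∂P) + (s - q) * (P A).toReal ≤ ∫ ω, max (s - Z ω) 0 ∂P := by
  have hsubgrad : ∀ ω, max (q - Z ω) 0 + A.indicator (fun _ => s - q) ω ≤ max (s - Z ω) 0 := by
    intro ω
    by_cases hω : ω ∈ A
    · have : Z ω ≤ q := hle hω
      rw [indicator_of_mem hω, max_eq_left (by linarith)]
      linarith [le_max_left (s - Z ω) 0]
    · have : q ≤ Z ω := not_lt.1 fun h => hω (hlt h)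
      rw [indicator_of_notMem hω, max_eq_right (by linarith), zero_add]
      exact le_max_right _ _
  have hind : Integrable (A.indicator fun _ => s - q) P := (integrable_const _).indicator hA
  calc _ = ∫ ω, (max (q - Z ω) 0 + A.indicator (fun _ => s - q) ω) ∂P := by
        rw [integral_add (integrable_max_sub hZ hZint q) hind, integral_indicator_const _ hA,
          smul_eq_mul, measureReal_def, mul_comm]
    _ ≤ _ := integral_mono ((integrable_max_sub hZ hZint q).add hind)
        (integrable_max_sub hZ hZint s) hsubgrad

theorem rockafellarUryasev_lowerQuantile_le [IsProbabilityMeasure P] (hZ : Measurable Z)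
    (hZint : Integrable (fun ω => max (-(Z ω)) 0) P) (hα : α ∈ Ioo (0 : ℝ) 1) (s : ℝ) :
    rockafellarUryasev P Z α (lowerQuantile P Z α) ≤ rockafellarUryasev P Z α s := by
  set q := lowerQuantile P Z α
  suffices (∫ ω, max (q - Z ω) 0 ∂P) + α * (s - q) ≤ ∫ ω, max (s - Z ω) 0 ∂P by
    rw [rockafellarUryasev, rockafellarUryasev, div_sub' hα.1.ne', div_sub' hα.1.ne',
      div_le_div_iff_of_pos_right hα.1]
    linarith
  rcases le_total q s with hqs | hsq
  · have := integral_max_sub_add_le (P := P) (A := {ω | Z ω ≤ q}) hZ hZint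
      (hZ measurableSet_Iic) (fun _ (h : Z _ < q) => h.le) subset_rfl s
    have := mul_le_mul_of_nonneg_left (le_measure_le_lowerQuantile (P := P) hZ hα)
      (sub_nonneg.2 hqs)
    linarith
  · have := integral_max_sub_add_le (P := P) (A := {ω | Z ω < q}) hZ hZint
      (hZ measurableSet_Iio) subset_rfl (fun _ (h : Z _ < q) => h.le) s
    have := mul_le_mul_of_nonpos_left (measure_lt_lowerQuantile_le (P := P) hZ hα)
      (sub_nonpos.2 hsq)
    linarith

theorem isLeast_ES [IsProbabilityMeasure P] (hZ : Measurable Z)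
    (hZint : Integrable (fun ω => max (-(Z ω)) 0) P) (hα : α ∈ Ioo (0 : ℝ) 1) :
    IsLeast (range (rockafellarUryasev P Z α)) (ES P Z α) := by
  rw [ES_eq_rockafellarUryasev_lowerQuantile hZ hZint hα.1.ne']
  exact ⟨mem_range_self _, forall_mem_range.2 (rockafellarUryasev_lowerQuantile_le hZ hZint hα)⟩

theorem ES_eq_of_rockafellarUryasev_eq [IsProbabilityMeasure P] {Z' : Ω → ℝ}
    (hZ : Measurable Z)
    (hZint : Integrable (fun ω => max (-(Z ω)) 0) P) (hZ' : Measurable Z')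
    (hZ'int : Integrable (fun ω => max (-(Z' ω)) 0) P) (hα : α ∈ Ioo (0 : ℝ) 1)
    {e : ℝ → ℝ} (he : Function.Surjective e) {c : ℝ} (hc : 0 ≤ c) {d : ℝ}
    (hRU : ∀ s, rockafellarUryasev P Z' α s = c * rockafellarUryasev P Z α (e s) + d) :
    ES P Z' α = c * ES P Z α + d :=
  (isLeast_ES hZ' hZ'int hα).unique
    (by simpa only [← hRU] using (isLeast_ES hZ hZint hα).range_affine_comp he hc d)

theorem rockafellarUryasev_add_le [IsFiniteMeasure P] {X Y : Ω → ℝ} (hX : Measurable X)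
    (hY : Measurable Y) (hXint : Integrable (fun ω => max (-(X ω)) 0) P)
    (hYint : Integrable (fun ω => max (-(Y ω)) 0) P) (hα : 0 < α) (s t : ℝ) :
    rockafellarUryasev P (fun ω => X ω + Y ω) α (s + t)
      ≤ rockafellarUryasev P X α s + rockafellarUryasev P Y α t := by
  have hint := (integrable_max_sub hX hXint s).add (integrable_max_sub hY hYint t)
  have hmono : ∫ ω, max (s + t - (X ω + Y ω)) 0 ∂P
      ≤ (∫ ω, max (s - X ω) 0 ∂P) + ∫ ω, max (t - Y ω) 0 ∂P := by
    rw [← integral_add (integrable_max_sub hX hXint s) (integrable_max_sub hY hYint t)]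
    refine integral_mono_of_nonneg (.of_forall fun ω => le_max_right _ _) hint
      (.of_forall fun ω => max_le ?_ (add_nonneg (le_max_right _ _) (le_max_right _ _)))
    linarith [le_max_left (s - X ω) 0, le_max_left (t - Y ω) 0]
  have := div_le_div_of_nonneg_right hmono hα.le
  rw [add_div] at this
  simp only [rockafellarUryasev]
  linarith

theorem rockafellarUryasev_const_mul {h : ℝ} (hh : 0 < h) (s : ℝ) :
    rockafellarUryasev P (fun ω => h * Z ω) α s = h * rockafellarUryasev P Z α (s / h) := by
  have hmax : ∀ ω, max (s - h * Z ω) 0 = h * max (s / h - Z ω) 0 := fun ω => by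
    rw [mul_max_of_nonneg _ _ hh.le, mul_sub, mul_div_cancel₀ _ hh.ne', mul_zero]
  simp only [rockafellarUryasev, hmax, integral_const_mul]
  field_simp

theorem rockafellarUryasev_add_const (a s : ℝ) :
    rockafellarUryasev P (fun ω => Z ω + a) α s = rockafellarUryasev P Z α (s - a) - a := by
  simp only [rockafellarUryasev, sub_add_eq_sub_sub, sub_right_comm s]
  ring

theorem rockafellarUryasev_zero_of_nonneg (hZ : ∀ᵐ ω ∂P, 0 ≤ Z ω) :
    rockafellarUryasev P Z α 0 = 0 := by
  rw [rockafellarUryasev, integral_eq_zero_of_ae (hZ.mono fun ω hω => ?_), zero_div, sub_zero]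
  exact max_eq_right (by simpa using hω)

end RockafellarUryasev

/-- Coherence of Expected Shortfall. -/
theorem es_coherent (P : Measure Ω) [IsProbabilityMeasure P] (α : ℝ)
    (hα : α ∈ Set.Ioo (0:ℝ) 1)
    (X Y : Ω → ℝ) (hX : Measurable X) (hY : Measurable Y)
    (hXint : Integrable (fun ω => max (-(X ω)) 0) P)
    (hYint : Integrable (fun ω => max (-(Y ω)) 0) P) :
    ((∀ᵐ ω ∂P, 0 ≤ X ω) → ES P X α ≤ 0) ∧
    (ES P (fun ω => X ω + Y ω) α ≤ ES P X α + ES P Y α) ∧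
    (∀ h : ℝ, 0 < h → ES P (fun ω => h * X ω) α = h * ES P X α) ∧
    (∀ a : ℝ, ES P (fun ω => X ω + a) α = ES P X α - a) := by
  refine ⟨fun hpos => ?_, ?_, fun h hh => ?_, fun a => ?_⟩
  · simpa only [rockafellarUryasev_zero_of_nonneg hpos] using
      (isLeast_ES hX hXint hα).2 (mem_range_self 0)
  · obtain ⟨s, hs⟩ := (isLeast_ES hX hXint hα).1
    obtain ⟨t, ht⟩ := (isLeast_ES hY hYint hα).1
    calc ES P (fun ω => X ω + Y ω) α
        ≤ rockafellarUryasev P (fun ω => X ω + Y ω) α (s + t) :=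
          (isLeast_ES (hX.add hY) (integrable_max_neg_add hX hY hXint hYint) hα).2
            (mem_range_self _)
      _ ≤ rockafellarUryasev P X α s + rockafellarUryasev P Y α t :=
          rockafellarUryasev_add_le hX hY hXint hYint hα.1 s t
      _ = ES P X α + ES P Y α := by rw [hs, ht]
  · simpa only [add_zero] using ES_eq_of_rockafellarUryasev_eq hX hXint (hX.const_mul h)
      (integrable_max_neg_const_mul hX hXint hh.le) hα
      (fun s => ⟨s * h, mul_div_cancel_right₀ s hh.ne'⟩) hh.le
      fun s => (rockafellarUryasev_const_mul hh s).trans (add_zero _).symm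
  · simpa only [one_mul, sub_eq_add_neg] using ES_eq_of_rockafellarUryasev_eq hX hXint
      (hX.add_const a) (integrable_max_neg_add_const hX hXint a) hα
      (fun s => ⟨s + a, add_sub_cancel_right s a⟩) zero_le_one
      fun s => (rockafellarUryasev_add_const a s).trans (by ring)
end
end

section
/- If X is a real-valued random variable on a probability space (Ω,𝒜,P) with E[X⁻] < ∞ and α ∈ (0,1) is fixed, then the α-tail mean equals the average of the lower quantiles below level α: TM_α(X) = α⁻¹ · ∫₀^α q_u(X) du, where q_u(X) is the lower u-quantile of X; equivalently, ES_α(X) = −α⁻¹ · ∫₀^α q_u(X) du. -/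
open MeasureTheory ProbabilityTheory Filter
open scoped Classical

noncomputable section

variable {Ω : Type*} [MeasurableSpace Ω]

/-!
Replace `X` by its law `μ` on `ℝ` and write `Q u` for the lower `u`-quantile and `F` for the cdf
of `μ`. For `u ∈ (0,1)` right-continuity of `F` gives the Galois connection `Q u ≤ x ↔ u ≤ F x`,
so `Q` carries Lebesgue measure on `(0,1)` to `μ`. With `c = Q α` this turns `E[X; X ≤ c]` into
`∫ Q` over `(0, F c]`, and `Q` is constantly `c` on `(α, F c]`, which accounts for the
correction term `c (α - F c)`.
-/

open Set

lemma setOf_id_le (x : ℝ) : {y : ℝ | id y ≤ x} = Iic x := rfl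

lemma volume_Ioo_inter_Iic {a b t : ℝ} (htb : t ≤ b) :
    volume (Ioo a b ∩ Iic t) = ENNReal.ofReal (t - a) :=
  le_antisymm
    ((measure_mono (show Ioo a b ∩ Iic t ⊆ Icc a t from fun _ hu => ⟨hu.1.1.le, hu.2⟩)).trans_eq
      Real.volume_Icc)
    (Real.volume_Ioo.symm.trans_le (measure_mono
      (show Ioo a t ⊆ Ioo a b ∩ Iic t from fun _ hu => ⟨⟨hu.1, hu.2.trans_le htb⟩, hu.2.le⟩)))

lemma integrableOn_Iic_id_of_integrable_negPart {μ : Measure ℝ} [IsFiniteMeasure μ]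
    (h : Integrable (fun x => max (-x) 0) μ) (c : ℝ) : IntegrableOn id (Iic c) μ := by
  refine Integrable.mono' (h.integrableOn.add (integrable_const |c|)) aestronglyMeasurable_id ?_
  filter_upwards [ae_restrict_mem measurableSet_Iic] with x (hx : x ≤ c)
  rw [id, Real.norm_eq_abs, abs_le, Pi.add_apply]
  constructor <;> linarith [le_max_left (-x) 0, le_max_right (-x) 0, le_abs_self c, abs_nonneg c]

section QuantileOfLaw

variable {μ : Measure ℝ} [IsProbabilityMeasure μ]

lemma lowerQuantile_id_eq (u : ℝ) : lowerQuantile μ id u = sInf {x | u ≤ cdf μ x} := by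
  simp only [lowerQuantile, cdf_eq_real, measureReal_def]
  rfl

lemma lowerQuantile_le_iff {u x : ℝ} (hu : u ∈ Ioo 0 1) :
    lowerQuantile μ id u ≤ x ↔ u ≤ cdf μ x := by
  obtain ⟨y, hy⟩ := ((tendsto_cdf_atBot μ).eventually_lt_const hu.1).exists
  have hbdd : BddBelow {x | u ≤ cdf μ x} :=
    ⟨y, fun z hz => not_lt.1 fun hzy => hy.not_ge (hz.trans (monotone_cdf μ hzy.le))⟩
  have hne : {x | u ≤ cdf μ x}.Nonempty :=
    ((tendsto_cdf_atTop μ).eventually_const_lt hu.2).exists.imp fun _ => le_of_lt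
  rw [lowerQuantile_id_eq]
  refine ⟨fun h => ?_, fun h => csInf_le hbdd h⟩
  have hright : ∀ z ∈ Ioi x, u ≤ cdf μ z := fun z hz => by
    obtain ⟨w, hw, hwz⟩ := exists_lt_of_csInf_lt hne (h.trans_lt hz)
    exact hw.trans (monotone_cdf μ hwz.le)
  exact ge_of_tendsto (((cdf μ).right_continuous x).tendsto.mono_left
    (nhdsWithin_mono _ Ioi_subset_Ici_self)) (eventually_nhdsWithin_of_forall hright)

lemma monotoneOn_lowerQuantile : MonotoneOn (lowerQuantile μ id) (Ioo 0 1) :=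
  fun _ hu _ hv huv => (lowerQuantile_le_iff hu).2 (huv.trans ((lowerQuantile_le_iff hv).1 le_rfl))

lemma aemeasurable_lowerQuantile :
    AEMeasurable (lowerQuantile μ id) (volume.restrict (Ioo 0 1)) :=
  aemeasurable_restrict_of_monotoneOn measurableSet_Ioo monotoneOn_lowerQuantile

lemma Ioo_inter_preimage_lowerQuantile_Iic (x : ℝ) :
    Ioo 0 1 ∩ lowerQuantile μ id ⁻¹' Iic x = Ioo 0 1 ∩ Iic (cdf μ x) :=
  Set.ext fun _ => and_congr_right lowerQuantile_le_iff

theorem map_lowerQuantile_volume :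
    (volume.restrict (Ioo 0 1)).map (lowerQuantile μ id) = μ := by
  refine (Measure.ext_of_Iic μ _ fun x => ?_).symm
  rw [Measure.map_apply_of_aemeasurable aemeasurable_lowerQuantile measurableSet_Iic,
    Measure.restrict_apply' measurableSet_Ioo, inter_comm, Ioo_inter_preimage_lowerQuantile_Iic,
    volume_Ioo_inter_Iic (cdf_le_one μ x), sub_zero, ofReal_cdf]

lemma restrict_Iic_eq_map_lowerQuantile (x : ℝ) :
    μ.restrict (Iic x)
      = (volume.restrict (Ioo 0 1 ∩ Iic (cdf μ x))).map (lowerQuantile μ id) := by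
  conv_lhs => rw [← map_lowerQuantile_volume (μ := μ)]
  rw [Measure.restrict_map_of_aemeasurable aemeasurable_lowerQuantile measurableSet_Iic,
    Measure.restrict_restrict' measurableSet_Ioo, inter_comm, Ioo_inter_preimage_lowerQuantile_Iic]

lemma aemeasurable_lowerQuantile_restrict (x : ℝ) :
    AEMeasurable (lowerQuantile μ id) (volume.restrict (Ioo 0 1 ∩ Iic (cdf μ x))) :=
  aemeasurable_lowerQuantile.mono_set inter_subset_left

lemma setIntegral_Iic_eq_setIntegral_lowerQuantile (x : ℝ) :
    ∫ y in Iic x, y ∂μ = ∫ u in Ioo 0 1 ∩ Iic (cdf μ x), lowerQuantile μ id u := by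
  rw [restrict_Iic_eq_map_lowerQuantile]
  exact integral_map (aemeasurable_lowerQuantile_restrict x) aestronglyMeasurable_id

lemma integrableOn_lowerQuantile {x : ℝ} (h : IntegrableOn id (Iic x) μ) :
    IntegrableOn (lowerQuantile μ id) (Ioo 0 1 ∩ Iic (cdf μ x)) := by
  rwa [IntegrableOn, restrict_Iic_eq_map_lowerQuantile,
    integrable_map_measure aestronglyMeasurable_id (aemeasurable_lowerQuantile_restrict x)] at h

theorem setIntegral_Ioc_lowerQuantile {α : ℝ} (hα : α ∈ Ioo 0 1)
    (hint : Integrable (fun x => max (-x) 0) μ) :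
    ∫ u in Ioc 0 α, lowerQuantile μ id u
      = ∫ x in Iic (lowerQuantile μ id α), x ∂μ
        + lowerQuantile μ id α * (α - cdf μ (lowerQuantile μ id α)) := by
  set c := lowerQuantile μ id α
  have hαF : α ≤ cdf μ c := (lowerQuantile_le_iff hα).1 le_rfl
  have hsplit : Ioo 0 1 ∩ Iic (cdf μ c) = Ioc 0 α ∪ (Ioo α 1 ∩ Iic (cdf μ c)) := by
    ext u
    constructor
    · rintro ⟨⟨hu0, hu1⟩, huF⟩
      rcases le_or_gt u α with huα | hαu
      exacts [Or.inl ⟨hu0, huα⟩, Or.inr ⟨⟨hαu, hu1⟩, huF⟩]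
    · rintro (⟨hu0, huα⟩ | ⟨⟨hαu, hu1⟩, huF⟩)
      exacts [⟨⟨hu0, huα.trans_lt hα.2⟩, huα.trans hαF⟩, ⟨⟨hα.1.trans hαu, hu1⟩, huF⟩]
  have hdisj : Disjoint (Ioc 0 α) (Ioo α 1 ∩ Iic (cdf μ c)) :=
    Set.disjoint_left.2 fun _ hu hu' => hu.2.not_gt hu'.1.1
  have hconst : EqOn (lowerQuantile μ id) (fun _ => c) (Ioo α 1 ∩ Iic (cdf μ c)) :=
    fun u hu => le_antisymm ((lowerQuantile_le_iff ⟨hα.1.trans hu.1.1, hu.1.2⟩).2 hu.2)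
      (monotoneOn_lowerQuantile hα ⟨hα.1.trans hu.1.1, hu.1.2⟩ hu.1.1.le)
  have hQint := integrableOn_lowerQuantile (integrableOn_Iic_id_of_integrable_negPart hint c)
  rw [hsplit] at hQint
  rw [setIntegral_Iic_eq_setIntegral_lowerQuantile, hsplit,
    setIntegral_union hdisj (measurableSet_Ioo.inter measurableSet_Iic) hQint.left_of_union
      hQint.right_of_union,
    setIntegral_congr_fun (measurableSet_Ioo.inter measurableSet_Iic) hconst, setIntegral_const,
    smul_eq_mul, measureReal_def, volume_Ioo_inter_Iic (cdf_le_one μ c),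
    ENNReal.toReal_ofReal (sub_nonneg.2 hαF)]
  ring

theorem tailMean_id_eq_integral_lowerQuantile {α : ℝ} (hα : α ∈ Ioo 0 1)
    (hint : Integrable (fun x => max (-x) 0) μ) :
    tailMean μ id α = α⁻¹ * ∫ u in (0 : ℝ)..α, lowerQuantile μ id u := by
  rw [intervalIntegral.integral_of_le hα.1.le, setIntegral_Ioc_lowerQuantile hα hint, tailMean,
    setOf_id_le, cdf_eq_real, measureReal_def]
  rfl

end QuantileOfLaw

section Law

variable {P : Measure Ω} {X : Ω → ℝ}

lemma map_setOf_id_le (hX : Measurable X) (x : ℝ) :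
    P.map X {y | id y ≤ x} = P {ω | X ω ≤ x} :=
  Measure.map_apply hX measurableSet_Iic

lemma lowerQuantile_map (hX : Measurable X) (u : ℝ) :
    lowerQuantile (P.map X) id u = lowerQuantile P X u := by
  simp only [lowerQuantile, map_setOf_id_le hX]

lemma tailMean_map (hX : Measurable X) (α : ℝ) :
    tailMean (P.map X) id α = tailMean P X α := by
  simp only [tailMean, lowerQuantile_map hX, map_setOf_id_le hX]
  rw [setOf_id_le, setIntegral_map measurableSet_Iic aestronglyMeasurable_id hX.aemeasurable]
  rfl

end Law

/-- Integral representation of tail mean and Expected Shortfall. -/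
theorem tailMean_eq_integral_quantile (P : Measure Ω) [IsProbabilityMeasure P] (α : ℝ)
    (hα : α ∈ Set.Ioo (0:ℝ) 1)
    (X : Ω → ℝ) (hX : Measurable X)
    (hXint : Integrable (fun ω => max (-(X ω)) 0) P) :
    tailMean P X α = α⁻¹ * ∫ u in (0:ℝ)..α, lowerQuantile P X u ∧
    ES P X α = - (α⁻¹ * ∫ u in (0:ℝ)..α, lowerQuantile P X u) := by
  have := Measure.isProbabilityMeasure_map (μ := P) hX.aemeasurable
  have hlaw : Integrable (fun x => max (-x) 0) (P.map X) :=
    (integrable_map_measure (by fun_prop) hX.aemeasurable).2 hXint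
  have hTM : tailMean P X α = α⁻¹ * ∫ u in (0:ℝ)..α, lowerQuantile P X u := by
    simpa only [tailMean_map hX, lowerQuantile_map hX] using
      tailMean_id_eq_integral_lowerQuantile hα hlaw
  exact ⟨hTM, by rw [ES, hTM]⟩

end
end

section
/- If X is a real-valued random variable on a probability space (Ω,𝒜,P) with E[X⁻] < ∞, then the mappings α ↦ TM_α(X) and α ↦ ES_α(X) are continuous on the open interval (0,1). -/
open MeasureTheory ProbabilityTheory Filter
open scoped Classical

noncomputable section

variable {Ω : Type*} [MeasurableSpace Ω]

/-! For `0 < α < 1` and `q` the lower `α`-quantile, `P[X < q] ≤ α ≤ P[X ≤ q]`, so `q` maximises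
the concave function `s ↦ E[min (X - s) 0] + s α`, whose value at `q` is `α · TM_α(X)`.
Hence `α ↦ α · TM_α(X)` is a pointwise maximum of affine functions of `α`, so it is convex and
therefore continuous on `(0, 1)`. -/

open Set Function

section Quantile

variable {μ : Measure ℝ} {α : ℝ}

lemma nonempty_setOf_le_cdf (hα : α < 1) : {x | α ≤ cdf μ x}.Nonempty :=
  let ⟨x, hx⟩ := ((tendsto_cdf_atTop μ).eventually (eventually_gt_nhds hα)).exists
  ⟨x, hx.le⟩

lemma bddBelow_setOf_le_cdf (hα : 0 < α) : BddBelow {x | α ≤ cdf μ x} := by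
  obtain ⟨b, hb⟩ :=
    eventually_atBot.mp ((tendsto_cdf_atBot μ).eventually (eventually_lt_nhds hα))
  exact ⟨b, fun x hx => le_of_not_ge fun hxb => (hb x hxb).not_ge hx⟩

lemma le_cdf_sInf_setOf_le_cdf (hα : α ∈ Ioo (0 : ℝ) 1) :
    α ≤ cdf μ (sInf {x | α ≤ cdf μ x}) := by
  have hbdd := bddBelow_setOf_le_cdf (μ := μ) hα.1
  have hne := nonempty_setOf_le_cdf (μ := μ) hα.2
  refine ge_of_tendsto (((cdf μ).right_continuous _).mono Ioi_subset_Ici_self) ?_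
  filter_upwards [self_mem_nhdsWithin] with x hx
  obtain ⟨y, hy, hyx⟩ := (csInf_lt_iff hbdd hne).mp hx
  exact hy.trans (monotone_cdf μ hyx.le)

lemma measureReal_Iio_sInf_setOf_le_cdf_le [IsProbabilityMeasure μ] (hα : 0 < α) :
    μ.real (Iio (sInf {x | α ≤ cdf μ x})) ≤ α := by
  set q := sInf {x | α ≤ cdf μ x}
  have hleft : leftLim (cdf μ) q ≤ α := by
    refine le_of_tendsto ((monotone_cdf μ).tendsto_leftLim q) ?_
    filter_upwards [self_mem_nhdsWithin] with x hx
    exact (not_le.mp (notMem_of_lt_csInf (s := {x | α ≤ cdf μ x}) hx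
      (bddBelow_setOf_le_cdf hα))).le
  rw [measureReal_def, ← measure_cdf μ, (cdf μ).measure_Iio (tendsto_cdf_atBot μ), sub_zero]
  exact ENNReal.toReal_le_of_le_ofReal hα.le (ENNReal.ofReal_le_ofReal hleft)

end Quantile

lemma convexOn_of_affine_le_of_eq {E ι : Type*} [AddCommGroup E] [Module ℝ E] {s : Set E}
    (hs : Convex ℝ s) {f : E → ℝ} (g : ι → E →ᵃ[ℝ] ℝ) (hle : ∀ i, ∀ x ∈ s, g i x ≤ f x)
    (heq : ∀ x ∈ s, ∃ i, f x = g i x) : ConvexOn ℝ s f := by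
  refine ⟨hs, fun x hx y hy a b ha hb hab => ?_⟩
  obtain ⟨i, hi⟩ := heq _ (hs hx hy ha hb hab)
  rw [hi, Convex.combo_affine_apply hab]
  exact add_le_add (smul_le_smul_of_nonneg_left (hle i x hx) ha)
    (smul_le_smul_of_nonneg_left (hle i y hy) hb)

section TailMean

variable {P : Measure Ω} {X : Ω → ℝ}

lemma lowerQuantile_eq_sInf_cdf_map [IsProbabilityMeasure P] (hX : Measurable X) (α : ℝ) :
    lowerQuantile P X α = sInf {x | α ≤ cdf (P.map X) x} := by
  have := Measure.isProbabilityMeasure_map (μ := P) hX.aemeasurable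
  simp_rw [cdf_eq_real, measureReal_def, Measure.map_apply hX measurableSet_Iic]
  rfl

lemma le_measureReal_le_lowerQuantile [IsProbabilityMeasure P] (hX : Measurable X) {α : ℝ}
    (hα : α ∈ Ioo (0 : ℝ) 1) : α ≤ P.real {ω | X ω ≤ lowerQuantile P X α} := by
  have := Measure.isProbabilityMeasure_map (μ := P) hX.aemeasurable
  have h := le_cdf_sInf_setOf_le_cdf (μ := P.map X) hα
  rwa [← lowerQuantile_eq_sInf_cdf_map hX, cdf_eq_real,
    map_measureReal_apply hX measurableSet_Iic] at h

lemma measureReal_lt_lowerQuantile_le [IsProbabilityMeasure P] (hX : Measurable X) {α : ℝ}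
    (hα : 0 < α) : P.real {ω | X ω < lowerQuantile P X α} ≤ α := by
  have := Measure.isProbabilityMeasure_map (μ := P) hX.aemeasurable
  have h := measureReal_Iio_sInf_setOf_le_cdf_le (μ := P.map X) hα
  rwa [← lowerQuantile_eq_sInf_cdf_map hX, map_measureReal_apply hX measurableSet_Iio] at h

variable [IsFiniteMeasure P] (hX : Measurable X)
  (hXint : Integrable (fun ω => max (-(X ω)) 0) P)
include hX hXint

lemma integrable_min_sub_zero (s : ℝ) : Integrable (fun ω => min (X ω - s) 0) P := by
  refine (hXint.add (integrable_const |s|)).mono'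
    ((hX.sub_const s).min measurable_const).aestronglyMeasurable (ae_of_all _ fun ω => ?_)
  rw [Real.norm_eq_abs, abs_of_nonpos (min_le_right _ _), Pi.add_apply]
  rcases le_total (X ω - s) 0 with h | h
  · rw [min_eq_left h]; linarith [le_max_left (-(X ω)) 0, le_abs_self s]
  · rw [min_eq_right h]; linarith [le_max_right (-(X ω)) 0, abs_nonneg s]

lemma setIntegral_le_eq_integral_min_sub_zero (s : ℝ) :
    ∫ ω in {ω | X ω ≤ s}, X ω ∂P = ∫ ω, min (X ω - s) 0 ∂P + s * P.real {ω | X ω ≤ s} := by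
  have hA : MeasurableSet {ω | X ω ≤ s} := hX measurableSet_Iic
  have hind : {ω | X ω ≤ s}.indicator (fun ω => X ω - s) = fun ω => min (X ω - s) 0 := by
    ext ω
    by_cases h : X ω ≤ s
    · simp [h]
    · simp [h, (not_le.mp h).le]
  have hint : IntegrableOn (fun ω => X ω - s) {ω | X ω ≤ s} P := by
    rw [← integrable_indicator_iff hA, hind]
    exact integrable_min_sub_zero hX hXint s
  calc ∫ ω in {ω | X ω ≤ s}, X ω ∂P = ∫ ω in {ω | X ω ≤ s}, ((X ω - s) + s) ∂P := by simp
    _ = ∫ ω, min (X ω - s) 0 ∂P + s * P.real {ω | X ω ≤ s} := by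
      rw [integral_add hint (integrable_const s).integrableOn, ← integral_indicator hA, hind,
        setIntegral_const, smul_eq_mul, mul_comm]

lemma mul_tailMean_eq {α : ℝ} (hα : α ≠ 0) :
    α * tailMean P X α =
      ∫ ω, min (X ω - lowerQuantile P X α) 0 ∂P + lowerQuantile P X α * α := by
  rw [tailMean, ← mul_assoc, mul_inv_cancel₀ hα, one_mul,
    setIntegral_le_eq_integral_min_sub_zero hX hXint, measureReal_def]
  ring

lemma integral_min_sub_zero_le_add_of_le_indicator {s t : ℝ} {A : Set Ω} (hA : MeasurableSet A)
    (h : ∀ ω, min (X ω - s) 0 ≤ min (X ω - t) 0 + A.indicator (fun _ => t - s) ω) :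
    ∫ ω, min (X ω - s) 0 ∂P ≤ ∫ ω, min (X ω - t) 0 ∂P + P.real A * (t - s) := by
  have hint_t := integrable_min_sub_zero hX hXint t
  calc ∫ ω, min (X ω - s) 0 ∂P
      ≤ ∫ ω, (min (X ω - t) 0 + A.indicator (fun _ => t - s) ω) ∂P :=
        integral_mono (integrable_min_sub_zero hX hXint s)
          (hint_t.add ((integrable_const _).indicator hA)) h
    _ = ∫ ω, min (X ω - t) 0 ∂P + P.real A * (t - s) := by
      rw [integral_add hint_t ((integrable_const _).indicator hA),
        integral_indicator_const _ hA, smul_eq_mul]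

omit [IsFiniteMeasure P] in
lemma integral_min_sub_zero_add_mul_le_lowerQuantile [IsProbabilityMeasure P] {α : ℝ}
    (hα : α ∈ Ioo (0 : ℝ) 1) (s : ℝ) :
    ∫ ω, min (X ω - s) 0 ∂P + s * α ≤
      ∫ ω, min (X ω - lowerQuantile P X α) 0 ∂P + lowerQuantile P X α * α := by
  set q := lowerQuantile P X α
  rcases le_total s q with hsq | hqs
  · have hle := integral_min_sub_zero_le_add_of_le_indicator hX hXint (P := P) (s := s)
      (t := q) (A := {ω | X ω < q}) (hX measurableSet_Iio) fun ω => by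
        by_cases h : X ω < q <;> simp only [indicator, mem_ofPred_eq, h, if_true, if_false] <;>
          rcases min_cases (X ω - s) 0 with h1 | h1 <;>
          rcases min_cases (X ω - q) 0 with h2 | h2 <;> linarith
    nlinarith [measureReal_lt_lowerQuantile_le (P := P) hX hα.1]
  · have hle := integral_min_sub_zero_le_add_of_le_indicator hX hXint (P := P) (s := s)
      (t := q) (A := {ω | X ω ≤ q}) (hX measurableSet_Iic) fun ω => by
        by_cases h : X ω ≤ q <;> simp only [indicator, mem_ofPred_eq, h, if_true, if_false] <;>
          rcases min_cases (X ω - s) 0 with h1 | h1 <;>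
          rcases min_cases (X ω - q) 0 with h2 | h2 <;> linarith
    nlinarith [le_measureReal_le_lowerQuantile (P := P) hX hα]

omit [IsFiniteMeasure P] in
lemma convexOn_mul_tailMean [IsProbabilityMeasure P] :
    ConvexOn ℝ (Ioo 0 1) fun α => α * tailMean P X α :=
  convexOn_of_affine_le_of_eq (convex_Ioo 0 1)
    (fun s => AffineMap.const ℝ ℝ (∫ ω, min (X ω - s) 0 ∂P) + s • AffineMap.id ℝ ℝ)
    (fun s α hα => by
      simpa [mul_tailMean_eq hX hXint hα.1.ne', mul_comm]
        using integral_min_sub_zero_add_mul_le_lowerQuantile hX hXint hα s)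
    (fun α hα => ⟨lowerQuantile P X α, by simp [mul_tailMean_eq hX hXint hα.1.ne', mul_comm]⟩)

end TailMean

/-- Continuity of tail mean and Expected Shortfall in the level α. -/
theorem tailMean_continuousOn (P : Measure Ω) [IsProbabilityMeasure P]
    (X : Ω → ℝ) (hX : Measurable X)
    (hXint : Integrable (fun ω => max (-(X ω)) 0) P) :
    ContinuousOn (fun α => tailMean P X α) (Set.Ioo (0:ℝ) 1) ∧
    ContinuousOn (fun α => ES P X α) (Set.Ioo (0:ℝ) 1) := by
  have hscaled : ContinuousOn (fun α => α * tailMean P X α) (Ioo 0 1) :=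
    (convexOn_mul_tailMean hX hXint).continuousOn isOpen_Ioo
  have hTM : ContinuousOn (fun α => tailMean P X α) (Ioo 0 1) :=
    ((continuousOn_inv₀.mono fun α hα => hα.1.ne').mul hscaled).congr fun α hα => by
      simp [inv_mul_cancel_left₀ hα.1.ne']
  exact ⟨hTM, hTM.neg⟩

end
end

section
/- Let X be an integrable real-valued random variable on a probability space (Ω,𝒜,P) and let α ∈ (0,1) be fixed. Then for every s ∈ [x_{(α)}, x^{(α)}], ES_α(X) = −α⁻¹·( E[X·1_{X ≤ s}] + s·(α − P[X ≤ s]) ); in particular, the right-hand side does not depend on the choice of s in the interval [x_{(α)}, x^{(α)}], and the tail mean and Expected Shortfall of X depend only on the distribution of X. -/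
/-!
Write `F x = P[X ≤ x]` and `q = x_{(α)}`. Right-continuity of `F` gives `α ≤ F q`, and `F t ≤ α`
for every `t < x^{(α)}`. So if `q < s ≤ x^{(α)}`, then `F q = α` and `X` has no mass in `(q, s)`,
which gives `E[X 1_{X ≤ s}] = E[X 1_{X ≤ q}] + s (F s - α)`; the extra `s (F s - α)` is cancelled by
the correction term `s (α - F s)`.
-/

open MeasureTheory ProbabilityTheory Filter
open scoped Classical

noncomputable section

variable {Ω : Type*} [MeasurableSpace Ω]

open Set Topology

namespace StieltjesFunction

lemma le_apply_csInf (f : StieltjesFunction ℝ) {α : ℝ} (hne : {x | α ≤ f x}.Nonempty)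
    (hbdd : BddBelow {x | α ≤ f x}) : α ≤ f (sInf {x | α ≤ f x}) := by
  have hright : Tendsto f (𝓝[>] sInf {x | α ≤ f x}) (𝓝 (f (sInf {x | α ≤ f x}))) :=
    (f.right_continuous _).tendsto.mono_left (nhdsWithin_mono _ Ioi_subset_Ici_self)
  refine ge_of_tendsto hright (eventually_nhdsWithin_of_forall fun x hx => ?_)
  obtain ⟨y, hy, hyx⟩ := (csInf_lt_iff hbdd hne).mp hx
  exact hy.trans (f.mono hyx.le)

lemma measure_Ioo_eq_zero_of_le (f : StieltjesFunction ℝ) {a b : ℝ} (h : ∀ t < b, f t ≤ f a) :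
    f.measure (Ioo a b) = 0 := by
  have hleftLim : Function.leftLim f b ≤ f a :=
    le_of_tendsto (f.mono.tendsto_leftLim b) (eventually_nhdsWithin_of_forall h)
  rw [f.measure_Ioo, ENNReal.ofReal_eq_zero]
  linarith

end StieltjesFunction

section Quantile

variable {P : Measure Ω} [IsProbabilityMeasure P] {X : Ω → ℝ} {α : ℝ}

lemma toReal_measure_setOf_le_eq_cdf_map (hX : AEMeasurable X P) (x : ℝ) :
    (P {ω | X ω ≤ x}).toReal = cdf (P.map X) x := by
  have : IsProbabilityMeasure (P.map X) := Measure.isProbabilityMeasure_map hX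
  rw [cdf_eq_real, measureReal_def, Measure.map_apply_of_aemeasurable hX measurableSet_Iic]
  rfl

lemma bddBelow_setOf_le_toReal_measure (hX : AEMeasurable X P) (hα : 0 < α) :
    BddBelow {x | α ≤ (P {ω | X ω ≤ x}).toReal} := by
  obtain ⟨x₀, hx₀⟩ := eventually_atBot.mp ((tendsto_cdf_atBot (P.map X)).eventually_lt_const hα)
  refine ⟨x₀, fun y (hy : α ≤ _) => le_of_not_gt fun hyx => ?_⟩
  rw [toReal_measure_setOf_le_eq_cdf_map hX] at hy
  exact (hx₀ y hyx.le).not_ge hy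

lemma le_toReal_measure_setOf_le_lowerQuantile (hX : AEMeasurable X P) (hα : α ∈ Ioo 0 1) :
    α ≤ (P {ω | X ω ≤ lowerQuantile P X α}).toReal := by
  have hset : {x | α ≤ (P {ω | X ω ≤ x}).toReal} = {x | α ≤ cdf (P.map X) x} := by
    simp only [toReal_measure_setOf_le_eq_cdf_map hX]
  have hne : {x | α ≤ cdf (P.map X) x}.Nonempty :=
    ((tendsto_cdf_atTop (P.map X)).eventually_const_lt hα.2).exists.imp fun _ => le_of_lt
  rw [lowerQuantile, hset, toReal_measure_setOf_le_eq_cdf_map hX]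
  exact (cdf (P.map X)).le_apply_csInf hne (hset ▸ bddBelow_setOf_le_toReal_measure hX hα.1)

lemma toReal_measure_setOf_le_le_of_lt_upperQuantile (hX : AEMeasurable X P) (hα : 0 < α)
    {t : ℝ} (ht : t < upperQuantile P X α) : (P {ω | X ω ≤ t}).toReal ≤ α :=
  le_of_not_gt fun hαt => notMem_of_lt_csInf ht
    ((bddBelow_setOf_le_toReal_measure hX hα).mono fun _ (h : α < _) => h.le) hαt

lemma measure_preimage_Ioo_eq_zero_of_toReal_measure_le (hX : Measurable X) {a b : ℝ}
    (h : ∀ t < b, (P {ω | X ω ≤ t}).toReal ≤ (P {ω | X ω ≤ a}).toReal) :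
    P (X ⁻¹' Ioo a b) = 0 := by
  have : IsProbabilityMeasure (P.map X) := Measure.isProbabilityMeasure_map hX.aemeasurable
  rw [← Measure.map_apply hX measurableSet_Ioo, ← measure_cdf (P.map X)]
  refine (cdf (P.map X)).measure_Ioo_eq_zero_of_le fun t ht => ?_
  simpa only [← toReal_measure_setOf_le_eq_cdf_map hX.aemeasurable] using h t ht

end Quantile

section TailMean

variable {P : Measure Ω} {X : Ω → ℝ}

def tailMeanAt (P : Measure Ω) (X : Ω → ℝ) (α s : ℝ) : ℝ :=
  α⁻¹ * ((∫ ω in {ω | X ω ≤ s}, X ω ∂P) + s * (α - (P {ω | X ω ≤ s}).toReal))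

lemma tailMean_eq_tailMeanAt (α : ℝ) : tailMean P X α = tailMeanAt P X α (lowerQuantile P X α) :=
  rfl

lemma setIntegral_setOf_le_eq_add_of_measure_Ioo_eq_zero [IsFiniteMeasure P] (hX : Measurable X)
    (hXint : Integrable X P) {a b : ℝ} (hab : a ≤ b) (hgap : P (X ⁻¹' Ioo a b) = 0) :
    ∫ ω in {ω | X ω ≤ b}, X ω ∂P
      = (∫ ω in {ω | X ω ≤ a}, X ω ∂P)
        + b * ((P {ω | X ω ≤ b}).toReal - (P {ω | X ω ≤ a}).toReal) := by
  have hdisj : Disjoint {ω | X ω ≤ a} (X ⁻¹' Ioc a b) := (Iic_disjoint_Ioc le_rfl).preimage X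
  have hsplit : {ω | X ω ≤ b} = {ω | X ω ≤ a} ∪ X ⁻¹' Ioc a b :=
    (congrArg (X ⁻¹' ·) (Iic_union_Ioc_eq_Iic hab).symm).trans (preimage_union ..)
  have hmass : (P {ω | X ω ≤ b}).toReal - (P {ω | X ω ≤ a}).toReal = P.real (X ⁻¹' Ioc a b) := by
    rw [hsplit, ← measureReal_def, measureReal_union hdisj (hX measurableSet_Ioc), measureReal_def]
    ring
  -- `X = b` almost everywhere on `{a < X ≤ b}`, since `X` has no mass in `(a, b)`.
  have hconst : ∫ ω in X ⁻¹' Ioc a b, X ω ∂P = ∫ ω in X ⁻¹' Ioc a b, b ∂P := by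
    refine setIntegral_congr_ae (hX measurableSet_Ioc) ?_
    filter_upwards [measure_eq_zero_iff_ae_notMem.mp hgap] with ω hω hωab
    exact le_antisymm hωab.2 (le_of_not_gt fun hlt => hω ⟨hωab.1, hlt⟩)
  rw [hmass, hsplit, setIntegral_union hdisj (hX measurableSet_Ioc) hXint.integrableOn
    hXint.integrableOn, hconst, setIntegral_const, smul_eq_mul, mul_comm]

lemma tailMeanAt_eq_of_measure_Ioo_eq_zero [IsFiniteMeasure P] (hX : Measurable X)
    (hXint : Integrable X P) {α a b : ℝ} (hab : a ≤ b) (hgap : P (X ⁻¹' Ioo a b) = 0)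
    (ha : (P {ω | X ω ≤ a}).toReal = α) : tailMeanAt P X α a = tailMeanAt P X α b := by
  rw [tailMeanAt, tailMeanAt, setIntegral_setOf_le_eq_add_of_measure_Ioo_eq_zero hX hXint hab hgap,
    ha]
  ring

end TailMean

/-- Representation of ES with any s in the quantile interval
(non-strict indicator). -/
theorem es_representation_le (P : Measure Ω) [IsProbabilityMeasure P] (α : ℝ)
    (hα : α ∈ Set.Ioo (0:ℝ) 1)
    (X : Ω → ℝ) (hX : Measurable X) (hXint : Integrable X P) :
    ∀ s ∈ Set.Icc (lowerQuantile P X α) (upperQuantile P X α),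
      ES P X α = - (α⁻¹ * ((∫ ω in {ω | X ω ≤ s}, X ω ∂P)
        + s * (α - (P {ω | X ω ≤ s}).toReal))) := by
  rintro s ⟨hqs, hsu⟩
  change -tailMean P X α = -tailMeanAt P X α s
  rw [tailMean_eq_tailMeanAt]
  set q := lowerQuantile P X α
  rcases hqs.eq_or_lt with rfl | hqs
  · rfl
  have hbelow : ∀ t < s, (P {ω | X ω ≤ t}).toReal ≤ α := fun t ht =>
    toReal_measure_setOf_le_le_of_lt_upperQuantile hX.aemeasurable hα.1 (ht.trans_le hsu)
  have hFq : (P {ω | X ω ≤ q}).toReal = α :=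
    le_antisymm (hbelow q hqs) (le_toReal_measure_setOf_le_lowerQuantile hX.aemeasurable hα)
  have hgap : P (X ⁻¹' Ioo q s) = 0 :=
    measure_preimage_Ioo_eq_zero_of_toReal_measure_le hX fun t ht => hFq ▸ hbelow t ht
  rw [tailMeanAt_eq_of_measure_Ioo_eq_zero hX hXint hqs.le hgap hFq]

end
end

section
/- Let α ∈ (0,1) be fixed and X a real-valued random variable on a probability space (Ω,𝒜,P). Suppose f : ℝ → ℝ satisfies E[(f∘X)⁻] < ∞, f(x) ≤ f(x_{(α)}) for all x < x_{(α)}, and f(x) ≥ f(x_{(α)}) for all x > x_{(α)}. Let A ∈ 𝒜 be an event with P[A] ≥ α and E[|f∘X|·1_A] < ∞. Then TM_α(f∘X) ≤ E[f∘X | A]. -/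
/-!
Write `Y = f ∘ X`, `s` for its lower `α`-quantile and `B = {Y ≤ s}`. Both sides are `s` plus a
normalised integral of `Y - s`:
`TM_α(Y) = s + α⁻¹ ∫_B (Y - s)` and `E[Y | A] = s + P[A]⁻¹ ∫_A (Y - s)`.
Pointwise `1_B (Y - s) = min (Y - s) 0 ≤ 1_A (Y - s)`, so `∫_B (Y - s) ≤ ∫_A (Y - s)`, and
`∫_B (Y - s) ≤ 0`; since `α ≤ P[A]`,
`α⁻¹ ∫_B (Y - s) ≤ P[A]⁻¹ ∫_B (Y - s) ≤ P[A]⁻¹ ∫_A (Y - s)`.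
-/

open MeasureTheory ProbabilityTheory Filter
open scoped Classical

noncomputable section

variable {Ω : Type*} [MeasurableSpace Ω]

section

variable {μ : Measure Ω} {Y : Ω → ℝ}

lemma integrableOn_setOf_le_of_integrable_negPart [IsFiniteMeasure μ] (hY : Measurable Y)
    (hneg : Integrable (fun ω => max (-Y ω) 0) μ) (s : ℝ) :
    IntegrableOn Y {ω | Y ω ≤ s} μ := by
  refine Integrable.mono' ((integrable_const (max s 0)).add hneg).restrict
    hY.aestronglyMeasurable.restrict ?_
  rw [ae_restrict_iff' (measurableSet_le hY measurable_const)]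
  refine ae_of_all _ fun ω (hω : Y ω ≤ s) => ?_
  rw [Real.norm_eq_abs, abs_le]
  constructor <;> simp only [Pi.add_apply] <;>
    linarith [le_max_left s 0, le_max_right s 0, le_max_left (-Y ω) 0, le_max_right (-Y ω) 0]

lemma setIntegral_sub_const [IsFiniteMeasure μ] {S : Set Ω} (hY : IntegrableOn Y S μ) (s : ℝ) :
    ∫ ω in S, (Y ω - s) ∂μ = ∫ ω in S, Y ω ∂μ - s * μ.real S := by
  rw [integral_sub hY (integrableOn_const (measure_ne_top μ S)), setIntegral_const, smul_eq_mul,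
    mul_comm]

lemma setIntegral_setOf_le_sub_nonpos {s : ℝ} (hY : Measurable Y) :
    ∫ ω in {ω | Y ω ≤ s}, (Y ω - s) ∂μ ≤ 0 :=
  setIntegral_nonpos (measurableSet_le hY measurable_const) fun _ hω => sub_nonpos.2 hω

lemma setIntegral_setOf_le_sub_le [IsFiniteMeasure μ] {s : ℝ} (hY : Measurable Y) {A : Set Ω}
    (hA : MeasurableSet A) (hYB : IntegrableOn Y {ω | Y ω ≤ s} μ) (hYA : IntegrableOn Y A μ) :
    ∫ ω in {ω | Y ω ≤ s}, (Y ω - s) ∂μ ≤ ∫ ω in A, (Y ω - s) ∂μ := by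
  have hB : MeasurableSet {ω | Y ω ≤ s} := measurableSet_le hY measurable_const
  have hc : ∀ S : Set Ω, IntegrableOn (fun _ => s) S μ := fun S =>
    integrableOn_const (measure_ne_top μ S)
  rw [← integral_indicator hB, ← integral_indicator hA]
  refine integral_mono ((hYB.sub (hc _)).integrable_indicator hB)
    ((hYA.sub (hc _)).integrable_indicator hA) fun ω => ?_
  by_cases hωB : Y ω ≤ s <;> by_cases hωA : ω ∈ A <;>
    simp only [Set.indicator, Set.mem_ofPred_eq, hωA, hωB, if_true, if_false] <;> linarith

lemma tailMean_eq_add_inv_mul_setIntegral_sub [IsFiniteMeasure μ] {α : ℝ} (hα : α ≠ 0)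
    (hY : IntegrableOn Y {ω | Y ω ≤ lowerQuantile μ Y α} μ) :
    tailMean μ Y α = lowerQuantile μ Y α
      + α⁻¹ * ∫ ω in {ω | Y ω ≤ lowerQuantile μ Y α}, (Y ω - lowerQuantile μ Y α) ∂μ := by
  rw [tailMean, setIntegral_sub_const hY, measureReal_def]
  field_simp
  ring

lemma condExpEvent_eq_add_setIntegral_sub_div [IsFiniteMeasure μ] {A : Set Ω}
    (hA : (μ A).toReal ≠ 0) (hY : IntegrableOn Y A μ) (s : ℝ) :
    condExpEvent μ Y A = s + (∫ ω in A, (Y ω - s) ∂μ) / (μ A).toReal := by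
  rw [condExpEvent, setIntegral_sub_const hY, measureReal_def]
  field_simp
  ring

end

theorem tailMean_le_condExp_general (P : Measure Ω) [IsProbabilityMeasure P] (α : ℝ)
    (hα : α ∈ Set.Ioo (0:ℝ) 1)
    (X : Ω → ℝ) (hX : Measurable X) (f : ℝ → ℝ) (hf : Measurable f)
    (hfint : Integrable (fun ω => max (-(f (X ω))) 0) P)
    (A : Set Ω) (hA : MeasurableSet A) (hPA : α ≤ (P A).toReal)
    (hAint : Integrable (fun ω => |f (X ω)|) (P.restrict A)) :
    tailMean P (fun ω => f (X ω)) α ≤ condExpEvent P (fun ω => f (X ω)) A := by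
  set Y : Ω → ℝ := fun ω => f (X ω)
  set s := lowerQuantile P Y α
  have hY : Measurable Y := hf.comp hX
  have hYB : IntegrableOn Y {ω | Y ω ≤ s} P :=
    integrableOn_setOf_le_of_integrable_negPart hY hfint s
  have hYA : IntegrableOn Y A P := (integrable_norm_iff hY.aestronglyMeasurable.restrict).1 hAint
  have hPA_pos : 0 < (P A).toReal := hα.1.trans_le hPA
  rw [tailMean_eq_add_inv_mul_setIntegral_sub hα.1.ne' hYB,
    condExpEvent_eq_add_setIntegral_sub_div hPA_pos.ne' hYA s,
    add_le_add_iff_left, div_eq_inv_mul]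
  calc α⁻¹ * ∫ ω in {ω | Y ω ≤ s}, (Y ω - s) ∂P
      ≤ (P A).toReal⁻¹ * ∫ ω in {ω | Y ω ≤ s}, (Y ω - s) ∂P :=
        mul_le_mul_of_nonpos_right (inv_anti₀ hα.1 hPA) (setIntegral_setOf_le_sub_nonpos hY)
    _ ≤ (P A).toReal⁻¹ * ∫ ω in A, (Y ω - s) ∂P :=
        mul_le_mul_of_nonneg_left (setIntegral_setOf_le_sub_le hY hA hYB hYA)
          (inv_pos.2 hPA_pos).le

/-- Neyman–Pearson type inequality: the tail mean of f∘X is dominated by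
the conditional expectation of f∘X given any event of probability at least α. -/
theorem tailMean_le_condExp (P : Measure Ω) [IsProbabilityMeasure P] (α : ℝ)
    (hα : α ∈ Set.Ioo (0:ℝ) 1)
    (X : Ω → ℝ) (hX : Measurable X) (f : ℝ → ℝ) (hf : Measurable f)
    (hfint : Integrable (fun ω => max (-(f (X ω))) 0) P)
    (hfle : ∀ x < lowerQuantile P X α, f x ≤ f (lowerQuantile P X α))
    (hfge : ∀ x, lowerQuantile P X α < x → f (lowerQuantile P X α) ≤ f x)
    (A : Set Ω) (hA : MeasurableSet A) (hPA : α ≤ (P A).toReal)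
    (hAint : Integrable (fun ω => |f (X ω)|) (P.restrict A)) :
    tailMean P (fun ω => f (X ω)) α ≤ condExpEvent P (fun ω => f (X ω)) A :=
  tailMean_le_condExp_general P α hα X hX f hf hfint A hA hPA hAint

end
end
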